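/- arXiv:1701.07495 — 2 statements merged into one kernel-verified Lean document; each statement's English description precedes it below -/
import Mathlib

section
/- The map sending a pair (ℓ, Z), where ℓ ∈ {0, 1, ..., 2^n − 1} (with the convention Φ_0 = {1, ..., 2^n−1} and Φ_ℓ = Φ_0 \ {ℓ} for ℓ ≥ 1) and Z ⊆ Φ_ℓ, to the pair of sets (Z, Φ_ℓ \ Z) is injective. In particular, the number of such pairs is 2^{2^n − 1} + (2^n − 1)·2^{2^n − 2}, which is strictly greater than 2^{2^n + n − 2}. -/
/-- `Φ n ℓ` is `{1, ..., 2^n − 1}` if `ℓ = 0`, and `{1, ..., 2^n − 1} \ {ℓ}` otherwise. -/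
def Phi (n ℓ : ℕ) : Finset ℕ :=
  if ℓ = 0 then Finset.Icc 1 (2 ^ n - 1) else Finset.Icc 1 (2 ^ n - 1) \ {ℓ}

open Finset

theorem Finset.eq_of_prodMk_sdiff_eq {α : Type*} [DecidableEq α] {s t Z W : Finset α}
    (hZ : Z ⊆ s) (hW : W ⊆ t) (h : (Z, s \ Z) = (W, t \ W)) : s = t := by
  obtain ⟨rfl, hsdiff⟩ := Prod.mk.inj h
  rw [← union_sdiff_of_subset hZ, ← union_sdiff_of_subset hW, hsdiff]

namespace Phi

variable {n ℓ k : ℕ}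

theorem mem_iff : k ∈ Phi n ℓ ↔ 1 ≤ k ∧ k ≤ 2 ^ n - 1 ∧ k ≠ ℓ := by
  unfold Phi
  split_ifs with hℓ
  · simp only [mem_Icc]
    omega
  · simp only [mem_sdiff, mem_Icc, mem_singleton]
    tauto

theorem self_notMem : ℓ ∉ Phi n ℓ := by
  simp [mem_iff]

theorem injOn : Set.InjOn (Phi n) (range (2 ^ n)) := by
  intro a ha b hb hab
  simp only [coe_range, Set.mem_Iio] at ha hb
  by_contra hne
  have key : ∀ {c d}, c < 2 ^ n → c ≠ d → c ≠ 0 → c ∈ Phi n d := fun hc hcd hc0 =>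
    mem_iff.2 ⟨by omega, by omega, hcd⟩
  rcases Nat.eq_zero_or_pos a with rfl | ha0
  · exact self_notMem (hab ▸ key hb (Ne.symm hne) (by omega))
  · exact self_notMem (hab.symm ▸ key ha hne (by omega))

theorem card_zero : #(Phi n 0) = 2 ^ n - 1 := by
  simp [Phi]

theorem card_of_pos (h1 : 1 ≤ ℓ) (h2 : ℓ < 2 ^ n) : #(Phi n ℓ) = 2 ^ n - 2 := by
  have hℓ : ℓ ∈ Icc 1 (2 ^ n - 1) := mem_Icc.2 ⟨h1, by omega⟩
  rw [Phi, if_neg (by omega), card_sdiff_of_subset (singleton_subset_iff.2 hℓ)]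
  simp only [Nat.card_Icc, card_singleton]
  omega

theorem card_sigma_powerset :
    #((range (2 ^ n)).sigma fun ℓ => (Phi n ℓ).powerset)
      = 2 ^ (2 ^ n - 1) + (2 ^ n - 1) * 2 ^ (2 ^ n - 2) := by
  obtain ⟨m, hm⟩ : ∃ m, 2 ^ n = m + 1 := ⟨2 ^ n - 1, by have := n.one_le_two_pow; omega⟩
  have hpos : ∀ i ∈ range m, #(Phi n (i + 1)).powerset = 2 ^ (2 ^ n - 2) := fun i hi => by
    rw [card_powerset, card_of_pos (by omega) (by simp at hi; omega)]
  rw [card_sigma, hm, sum_range_succ', sum_congr rfl hpos, ← hm, card_powerset, card_zero,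
    sum_const, card_range, smul_eq_mul, add_comm, hm, Nat.add_sub_cancel]

end Phi

theorem two_pow_pred_add_mul_two_pow_sub_two {N : ℕ} (hN : 2 ≤ N) :
    2 ^ (N - 1) + (N - 1) * 2 ^ (N - 2) = (N + 1) * 2 ^ (N - 2) := by
  obtain ⟨m, rfl⟩ : ∃ m, N = m + 2 := ⟨N - 2, by omega⟩
  simp only [Nat.add_sub_cancel, show m + 2 - 1 = m + 1 by omega, pow_succ]
  ring

theorem stmt_4 (n : ℕ) (hn : 2 ≤ n) :
    (∀ ℓ₁ ∈ Finset.range (2 ^ n), ∀ ℓ₂ ∈ Finset.range (2 ^ n),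
      ∀ Z₁ ⊆ Phi n ℓ₁, ∀ Z₂ ⊆ Phi n ℓ₂,
      (Z₁, Phi n ℓ₁ \ Z₁) = (Z₂, Phi n ℓ₂ \ Z₂) → ℓ₁ = ℓ₂ ∧ Z₁ = Z₂) ∧
    ((Finset.range (2 ^ n)).sigma (fun ℓ => (Phi n ℓ).powerset)).card
      = 2 ^ (2 ^ n - 1) + (2 ^ n - 1) * 2 ^ (2 ^ n - 2) ∧
    2 ^ (2 ^ n - 1) + (2 ^ n - 1) * 2 ^ (2 ^ n - 2) > 2 ^ (2 ^ n + n - 2) := by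
  have hN : 4 ≤ 2 ^ n := by
    simpa using Nat.pow_le_pow_right (show 0 < 2 by norm_num) hn
  refine ⟨fun ℓ₁ hℓ₁ ℓ₂ hℓ₂ Z₁ hZ₁ Z₂ hZ₂ h =>
    ⟨Phi.injOn hℓ₁ hℓ₂ (eq_of_prodMk_sdiff_eq hZ₁ hZ₂ h), (Prod.mk.inj h).1⟩,
    Phi.card_sigma_powerset, ?_⟩
  rw [two_pow_pred_add_mul_two_pow_sub_two (by omega),
    show 2 ^ n + n - 2 = n + (2 ^ n - 2) by omega, pow_add]
  exact Nat.mul_lt_mul_of_pos_right (by omega) (by positivity)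
end

section
/- For any ℓ with 2 ≤ ℓ ≤ 2^n − 1 and any two distinct subsets Z, W of Φ_ℓ = {2,...,2^n−1} \ {ℓ}: either the product of elements of Z ∪ (Φ_ℓ \ W) is strictly less than (2^n−1)!/ℓ, or the product of elements of W ∪ (Φ_ℓ \ Z) is strictly less than (2^n−1)!/ℓ. -/
/-!
With `Φ = {2, …, 2ⁿ - 1} \ {ℓ}` we have `(2ⁿ - 1)! / ℓ = ∏ Φ`. Since `Z ≠ W`, some `x ∈ Φ` lies in
exactly one of them, say in `W` but not in `Z`. Then `Z ∪ (Φ \ W)` is a subset of `Φ \ {x}`, so its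
product is at most `∏ Φ / x < ∏ Φ`, all factors being at least `2`.
-/

open Finset
open scoped Nat

namespace Finset

variable {ι R : Type*} [CommSemiring R] [PartialOrder R] [IsStrictOrderedRing R] {f : ι → R}

theorem prod_lt_prod_of_subset_erase [DecidableEq ι] {s t : Finset ι} {i : ι} (hi : i ∈ t)
    (hst : s ⊆ t.erase i) (hf : ∀ j ∈ t, 1 ≤ f j) (hfi : 1 < f i) :
    ∏ j ∈ s, f j < ∏ j ∈ t, f j := by
  have hle : ∏ j ∈ s, f j ≤ ∏ j ∈ t.erase i, f j :=
    prod_le_prod_of_subset_of_one_le hst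
      (fun j hj ↦ zero_le_one.trans (hf j (mem_of_mem_erase (hst hj))))
      (fun j hj _ ↦ hf j (mem_of_mem_erase hj))
  have hpos : 0 < ∏ j ∈ t.erase i, f j :=
    zero_lt_one.trans_le (one_le_prod fun j hj ↦ hf j (mem_of_mem_erase hj))
  calc ∏ j ∈ s, f j ≤ ∏ j ∈ t.erase i, f j := hle
    _ < f i * ∏ j ∈ t.erase i, f j := lt_mul_of_one_lt_left hpos hfi
    _ = ∏ j ∈ t, f j := mul_prod_erase t f hi

theorem union_sdiff_subset_erase [DecidableEq ι] {s t u : Finset ι} {i : ι} (hs : s ⊆ u)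
    (his : i ∉ s) (hit : i ∈ t) : s ∪ (u \ t) ⊆ u.erase i := by
  grind

theorem prod_union_sdiff_lt_or_prod_union_sdiff_lt [DecidableEq ι] {s t u : Finset ι}
    (hs : s ⊆ u) (ht : t ⊆ u) (hst : s ≠ t) (hf : ∀ i ∈ u, 1 < f i) :
    ∏ i ∈ s ∪ (u \ t), f i < ∏ i ∈ u, f i ∨ ∏ i ∈ t ∪ (u \ s), f i < ∏ i ∈ u, f i := by
  have hf' : ∀ i ∈ u, 1 ≤ f i := fun i hi ↦ (hf i hi).le
  by_cases hsub : s ⊆ t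
  · obtain ⟨i, hit, his⟩ := not_subset.mp fun hts ↦ hst (subset_antisymm hsub hts)
    exact .inl <| prod_lt_prod_of_subset_erase (ht hit) (union_sdiff_subset_erase hs his hit) hf'
      (hf i (ht hit))
  · obtain ⟨i, his, hit⟩ := not_subset.mp hsub
    exact .inr <| prod_lt_prod_of_subset_erase (hs his) (union_sdiff_subset_erase ht hit his) hf'
      (hf i (hs his))

end Finset

theorem Nat.prod_Icc_two_id_eq_factorial (m : ℕ) : ∏ x ∈ Icc 2 m, x = m ! := by
  have hIcc : Icc 2 m = (Ico 1 (m + 1)).erase 1 := by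
    ext x
    simp only [Finset.mem_Icc, Finset.mem_erase, Finset.mem_Ico]
    omega
  rw [hIcc, Finset.prod_erase (f := fun x : ℕ ↦ x) _ rfl, prod_Ico_id_eq_factorial]

theorem Nat.factorial_div_eq_prod_Icc_two_sdiff {m ℓ : ℕ} (hℓ : ℓ ∈ Icc 2 m) :
    m ! / ℓ = ∏ x ∈ Icc 2 m \ {ℓ}, x := by
  have hℓ0 : 0 < ℓ := by grind
  rw [← prod_Icc_two_id_eq_factorial, sdiff_singleton_eq_erase, ← mul_prod_erase _ _ hℓ,
    Nat.mul_div_cancel_left _ hℓ0]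

theorem stmt_19_general (n : ℕ) (ℓ : ℕ) (hℓ₁ : 2 ≤ ℓ) (hℓ₂ : ℓ ≤ 2 ^ n - 1)
    (Z W : Finset ℕ)
    (hZ : Z ⊆ Finset.Icc 2 (2 ^ n - 1) \ {ℓ}) (hW : W ⊆ Finset.Icc 2 (2 ^ n - 1) \ {ℓ})
    (hne : Z ≠ W) :
    (∏ x ∈ Z ∪ ((Finset.Icc 2 (2 ^ n - 1) \ {ℓ}) \ W), x) < Nat.factorial (2 ^ n - 1) / ℓ ∨
    (∏ x ∈ W ∪ ((Finset.Icc 2 (2 ^ n - 1) \ {ℓ}) \ Z), x) < Nat.factorial (2 ^ n - 1) / ℓ := by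
  rw [Nat.factorial_div_eq_prod_Icc_two_sdiff (mem_Icc.mpr ⟨hℓ₁, hℓ₂⟩)]
  refine prod_union_sdiff_lt_or_prod_union_sdiff_lt hZ hW hne fun x hx ↦ ?_
  have hx2 : 2 ≤ x := (mem_Icc.mp (mem_sdiff.mp hx).1).1
  omega

theorem stmt_19 (n : ℕ) (hn : 2 ≤ n) (ℓ : ℕ) (hℓ₁ : 2 ≤ ℓ) (hℓ₂ : ℓ ≤ 2 ^ n - 1)
    (Z W : Finset ℕ)
    (hZ : Z ⊆ Finset.Icc 2 (2 ^ n - 1) \ {ℓ}) (hW : W ⊆ Finset.Icc 2 (2 ^ n - 1) \ {ℓ})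
    (hne : Z ≠ W) :
    (∏ x ∈ Z ∪ ((Finset.Icc 2 (2 ^ n - 1) \ {ℓ}) \ W), x) < Nat.factorial (2 ^ n - 1) / ℓ ∨
    (∏ x ∈ W ∪ ((Finset.Icc 2 (2 ^ n - 1) \ {ℓ}) \ Z), x) < Nat.factorial (2 ^ n - 1) / ℓ :=
  stmt_19_general n ℓ hℓ₁ hℓ₂ Z W hZ hW hne
end
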